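/- Let n, N, J be positive integers, let Y ∈ ℝ^{n×N}, and let λ, L be reals with 0 < λ < L. Define f(C, D) = ‖Y − D Cᵀ‖_F² + λ² Σ_{j=1}^J ‖c_j‖₀, where c_j and d_j denote the j-th columns of C ∈ ℝ^{N×J} and D ∈ ℝ^{n×J}. Consider sequences (c_j^t)_{t≥0} ⊂ ℝ^N and (d_j^t)_{t≥0} ⊂ ℝ^n for j = 1, …, J such that for all t and j: ‖d_j^t‖₂ = 1, ‖c_j^t‖_∞ ≤ L, and every nonzero entry of c_j^t has absolute value at least λ; and such that for every t ≥ 1 and j, with E_j^t := Y − Σ_{k<j} d_k^t (c_k^t)ᵀ − Σ_{k>j} d_k^{t−1} (c_k^{t−1})ᵀ: (a) c_j^t is a global minimizer of c ↦ ‖E_j^t − d_j^{t−1} cᵀ‖_F² + λ² ‖c‖₀ over {c : ‖c‖_∞ ≤ L}, and (b) d_j^t is a global minimizer of d ↦ ‖E_j^t − d (c_j^t)ᵀ‖_F² over {d : ‖d‖₂ = 1}. Suppose moreover that every accumulation point (C, D) of the sequence (C^t, D^t) is such that for each j, the vector (Y − D Cᵀ + d_j c_jᵀ)ᵀ d_j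 ∈ ℝ^N has no entry of absolute value exactly λ. Then every accumulation point (C*, D*) of the sequence is coordinatewise globally optimal for f: for each j, the column c*_j is a global minimizer of c ↦ f over {c : ‖c‖_∞ ≤ L} with all other columns of C* and all columns of D* held fixed, and d*_j is a global minimizer of d ↦ f over {d : ‖d‖₂ = 1} with all other variables held fixed at their values in (C*, D*). -/

import Mathlib

open Filter Matrix Finset

noncomputable def frobSq {n N : ℕ} (M : Matrix (Fin n) (Fin N) ℝ) : ℝ :=
  ∑ i, ∑ j, (M i j) ^ 2

noncomputable def l0 {N : ℕ} (c : Fin N → ℝ) : ℕ :=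
  (Finset.univ.filter (fun i => c i ≠ 0)).card

noncomputable def outer {n N : ℕ} (d : Fin n → ℝ) (c : Fin N → ℝ) :
    Matrix (Fin n) (Fin N) ℝ :=
  Matrix.of fun i j => d i * c j

/-
The objective does not increase along a sweep of block updates and is bounded below, so its values
along the iterates converge, and every value met inside a sweep is squeezed between two
consecutive ones. Given iterates converging to `(C*, D*)` along a subsequence, pass to a further
subsequence along which the next iterates converge to `(C', D')`. The gap condition makes `‖·‖₀`
eventually constant along the iterates, so the optimality of each block update survives in the
limit, and the three objective values met while updating column `j` have the same limit. When no
entry of `Eⱼᵀ dⱼ` equals `λ`, the sparse coding problem has the hard-thresholded vector as its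
unique minimizer, which forces `c'ⱼ = c*ⱼ`; the dictionary problem has a unique minimizer as soon
as `Eⱼ cⱼ ≠ 0`, which gives `d'ⱼ c'ⱼᵀ = d*ⱼ c*ⱼᵀ`. By induction on `j`, the residuals `Eⱼ` computed
from `(C', D')` and from `(C*, D*)` therefore agree, and `(C*, D*)` is optimal in each block.
-/

open Metric Topology

section

variable {n N J : ℕ} {α ι : Type*}

noncomputable def scalarObj (lam b s : ℝ) : ℝ :=
  (s - b) ^ 2 + lam ^ 2 * if s = 0 then 0 else 1

noncomputable def hardThreshold (lam L b : ℝ) : ℝ :=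
  if |b| < lam then 0 else max (-L) (min L b)

lemma max_neg_min_cases {L : ℝ} (hL : 0 ≤ L) (b : ℝ) :
    L ≤ b ∧ max (-L) (min L b) = L ∨ b ≤ -L ∧ max (-L) (min L b) = -L ∨
      (-L ≤ b ∧ b ≤ L) ∧ max (-L) (min L b) = b := by
  rcases le_total L b with hb | hb
  · exact .inl ⟨hb, by rw [min_eq_left hb, max_eq_right (by linarith)]⟩
  rcases le_total b (-L) with hb' | hb'
  · exact .inr (.inl ⟨hb', by rw [min_eq_right hb, max_eq_left hb']⟩)
  · exact .inr (.inr ⟨⟨hb', hb⟩, by rw [min_eq_right hb, max_eq_right hb']⟩)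

lemma sq_sub_clamp_lt {L b s : ℝ} (hs : |s| ≤ L) (hne : s ≠ max (-L) (min L b)) :
    (max (-L) (min L b) - b) ^ 2 < (s - b) ^ 2 := by
  obtain ⟨hs₁, hs₂⟩ := abs_le.mp hs
  have hst : 0 < (s - max (-L) (min L b)) ^ 2 := sq_pos_of_ne_zero (sub_ne_zero.mpr hne)
  -- `max (-L) (min L b)` is the projection of `b` onto `[-L, L]`
  have hproj : 0 ≤ (s - max (-L) (min L b)) * (max (-L) (min L b) - b) := by
    rcases max_neg_min_cases ((abs_nonneg s).trans hs) b with ⟨hb, ht⟩ | ⟨hb, ht⟩ | ⟨-, ht⟩ <;>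
      rw [ht] <;> nlinarith
  nlinarith

lemma scalarObj_hardThreshold_lt {lam L b s : ℝ} (hlam : 0 < lam) (hL : lam < L)
    (hb : |b| ≠ lam) (hs : |s| ≤ L) (hne : s ≠ hardThreshold lam L b) :
    scalarObj lam b (hardThreshold lam L b) < scalarObj lam b s := by
  unfold hardThreshold at hne ⊢
  split_ifs at hne ⊢ with hsmall
  · have : b ^ 2 < lam ^ 2 := by nlinarith [sq_abs b, abs_nonneg b]
    simp only [scalarObj, if_neg hne, ↓reduceIte]
    nlinarith
  · have hbig : lam < |b| := lt_of_le_of_ne (not_lt.mp hsmall) (Ne.symm hb)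
    have hlt : (max (-L) (min L b) - b) ^ 2 + lam ^ 2 < b ^ 2 := by
      rcases max_neg_min_cases (hlam.trans hL).le b with ⟨hb, ht⟩ | ⟨hb, ht⟩ | ⟨-, ht⟩ <;>
        rw [ht] <;> nlinarith [sq_abs b, abs_nonneg b]
    have ht : max (-L) (min L b) ≠ 0 := fun h => by rw [h] at hlt; nlinarith
    simp only [scalarObj, if_neg ht]
    by_cases hs0 : s = 0
    · simp only [hs0, ↓reduceIte]; nlinarith
    · simp only [if_neg hs0]; nlinarith [sq_sub_clamp_lt hs hne]

lemma eq_hardThreshold_of_isMinOn {lam L b s : ℝ} (hlam : 0 < lam) (hL : lam < L)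
    (hb : |b| ≠ lam) (hmin : IsMinOn (scalarObj lam b) (closedBall 0 L) s)
    (hs : s ∈ closedBall 0 L) : s = hardThreshold lam L b := by
  simp only [mem_closedBall_zero_iff, Real.norm_eq_abs] at hs
  by_contra hne
  have hT : hardThreshold lam L b ∈ closedBall 0 L := by
    simp only [hardThreshold, mem_closedBall_zero_iff, Real.norm_eq_abs]
    split_ifs
    · simpa using (hlam.trans hL).le
    · exact abs_le.mpr ⟨le_max_left _ _, max_le (by linarith) (min_le_left _ _)⟩
  exact (scalarObj_hardThreshold_lt hlam hL hb hs hne).not_ge (isMinOn_iff.mp hmin _ hT)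

def unitVectors (n : ℕ) : Set (Fin n → ℝ) := {d | ∑ i, d i ^ 2 = 1}

noncomputable def sparseObj (lam : ℝ) (E : Matrix (Fin n) (Fin N) ℝ)
    (d : Fin n → ℝ) (c : Fin N → ℝ) : ℝ :=
  frobSq (E - outer d c) + lam ^ 2 * l0 c

lemma frobSq_nonneg (M : Matrix (Fin n) (Fin N) ℝ) : 0 ≤ frobSq M := by
  unfold frobSq; positivity

lemma continuous_frobSq : Continuous (frobSq : Matrix (Fin n) (Fin N) ℝ → ℝ) := by
  unfold frobSq; fun_prop

lemma continuous_outer :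
    Continuous fun p : (Fin n → ℝ) × (Fin N → ℝ) => outer p.1 p.2 := by
  unfold outer; fun_prop

lemma frobSq_sub_outer (E : Matrix (Fin n) (Fin N) ℝ) (d : Fin n → ℝ)
    (c : Fin N → ℝ) :
    frobSq (E - outer d c) =
      frobSq E - 2 * (d ⬝ᵥ E *ᵥ c) + (∑ p, d p ^ 2) * ∑ i, c i ^ 2 := by
  have hterm : ∀ p i, (E p i - d p * c i) ^ 2 =
      E p i ^ 2 - 2 * (d p * (E p i * c i)) + d p ^ 2 * c i ^ 2 := fun p i => by ring
  simp only [frobSq, outer, Matrix.sub_apply, of_apply, hterm, Finset.sum_add_distrib,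
    Finset.sum_sub_distrib, ← Finset.mul_sum, ← Finset.sum_mul, dotProduct, mulVec]

lemma l0_eq_sum (c : Fin N → ℝ) :
    (l0 c : ℝ) = ∑ i, if c i = 0 then 0 else 1 := by
  simp [l0, Finset.card_filter, ite_not]

lemma sparseObj_eq_sum_scalarObj (lam : ℝ) (E : Matrix (Fin n) (Fin N) ℝ)
    {d : Fin n → ℝ} (hd : d ∈ unitVectors n) (c : Fin N → ℝ) :
    sparseObj lam E d c =
      frobSq E - ∑ i, (Eᵀ *ᵥ d) i ^ 2 + ∑ i, scalarObj lam ((Eᵀ *ᵥ d) i) (c i) := by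
  have hdot : d ⬝ᵥ E *ᵥ c = ∑ i, c i * (Eᵀ *ᵥ d) i := by
    rw [dotProduct_mulVec, mulVec_transpose, dotProduct_comm]; rfl
  set b := Eᵀ *ᵥ d
  have hterm : ∀ i, scalarObj lam (b i) (c i) =
      c i ^ 2 - 2 * (c i * b i) + b i ^ 2 + lam ^ 2 * if c i = 0 then 0 else 1 :=
    fun i => by rw [scalarObj]; ring
  rw [sparseObj, frobSq_sub_outer, hdot, show ∑ p, d p ^ 2 = 1 from hd, l0_eq_sum]
  simp only [hterm, Finset.sum_add_distrib, Finset.sum_sub_distrib, ← Finset.mul_sum]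
  ring

lemma isMinOn_apply_of_isMinOn_sum [Fintype ι] [DecidableEq ι]
    (g : ι → ℝ → ℝ) {S : Set ℝ} {x : ι → ℝ}
    (hmin : IsMinOn (fun y => ∑ i, g i (y i)) (Set.univ.pi fun _ => S) x)
    (hx : x ∈ Set.univ.pi fun _ => S) (i : ι) :
    IsMinOn (g i) S (x i) := by
  refine isMinOn_iff.mpr fun s hs => ?_
  have hle := isMinOn_iff.mp hmin (Function.update x i s)
    (Set.update_mem_pi_iff.mpr ⟨fun k _ => hx k trivial, fun _ => hs⟩)
  simp only [Function.apply_update (fun k => g k),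
    Finset.sum_update_of_mem (Finset.mem_univ i)] at hle
  rw [← Finset.add_sum_erase _ _ (Finset.mem_univ i)] at hle
  simp only [Finset.sdiff_singleton_eq_erase] at hle
  exact add_le_add_iff_right _ |>.mp hle

lemma sum_sq_pos [Fintype ι] {v : ι → ℝ} (hv : v ≠ 0) : 0 < ∑ i, v i ^ 2 := by
  obtain ⟨i, hi⟩ := Function.ne_iff.mp hv
  exact Finset.sum_pos' (fun _ _ => sq_nonneg _) ⟨i, Finset.mem_univ _, sq_pos_of_ne_zero hi⟩

lemma mem_closedBall_zero_iff_forall_abs_le {L : ℝ} (hL : 0 ≤ L) {c : Fin N → ℝ} :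
    c ∈ closedBall 0 L ↔ ∀ i, |c i| ≤ L := by
  simp [pi_norm_le_iff_of_nonneg hL, Real.norm_eq_abs]

lemma eq_hardThreshold_of_isMinOn_sparseObj {lam L : ℝ} (hlam : 0 < lam)
    (hL : lam < L) {E : Matrix (Fin n) (Fin N) ℝ} {d : Fin n → ℝ} (hd : d ∈ unitVectors n)
    (hgap : ∀ i, |(Eᵀ *ᵥ d) i| ≠ lam) {c : Fin N → ℝ}
    (hmin : IsMinOn (sparseObj lam E d) (closedBall 0 L) c) (hc : c ∈ closedBall 0 L) :
    c = fun i => hardThreshold lam L ((Eᵀ *ᵥ d) i) := by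
  rw [closedBall_pi _ (hlam.trans hL).le] at hmin hc
  have hsum : IsMinOn (fun y => ∑ i, scalarObj lam ((Eᵀ *ᵥ d) i) (y i))
      (Set.univ.pi fun _ => closedBall 0 L) c :=
    isMinOn_iff.mpr fun y hy => by
      have := isMinOn_iff.mp hmin y hy
      rw [sparseObj_eq_sum_scalarObj lam E hd, sparseObj_eq_sum_scalarObj lam E hd] at this
      linarith
  funext i
  exact eq_hardThreshold_of_isMinOn hlam hL (hgap i) (isMinOn_apply_of_isMinOn_sum _ hsum hc i)
    (hc i trivial)

lemma mulVec_ne_zero_of_isMinOn_sparseObj {lam L : ℝ} (hL : 0 ≤ L)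
    {E : Matrix (Fin n) (Fin N) ℝ} {d : Fin n → ℝ} (hd : d ∈ unitVectors n)
    {c : Fin N → ℝ} (hmin : IsMinOn (sparseObj lam E d) (closedBall 0 L) c) (hc : c ≠ 0) :
    E *ᵥ c ≠ 0 := by
  -- comparing with `0` gives `2 ⟪d, E c⟫ ≥ ‖c‖² > 0`
  intro hEc
  have hle := isMinOn_iff.mp hmin 0 (mem_closedBall_self hL)
  have h0 : sparseObj lam E d 0 = frobSq E := by
    have : outer d (0 : Fin N → ℝ) = 0 := by ext; simp [outer]
    simp [sparseObj, this, l0]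
  rw [h0, sparseObj, frobSq_sub_outer, hEc, dotProduct_zero,
    show ∑ p, d p ^ 2 = 1 from hd] at hle
  nlinarith [sum_sq_pos hc, (l0 c).cast_nonneg (α := ℝ)]

lemma eq_smul_of_forall_dotProduct_le {v : Fin n → ℝ} (hv : v ≠ 0) {d : Fin n → ℝ}
    (hd : d ∈ unitVectors n) (hmax : ∀ d' ∈ unitVectors n, d' ⬝ᵥ v ≤ d ⬝ᵥ v) :
    d = (√(∑ i, v i ^ 2))⁻¹ • v := by
  set r := √(∑ i, v i ^ 2)
  have hr : 0 < r := Real.sqrt_pos.mpr (sum_sq_pos hv)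
  have hr2 : ∑ i, v i ^ 2 = r ^ 2 := (Real.sq_sqrt (sum_sq_pos hv).le).symm
  set u := r⁻¹ • v
  have hu : u ∈ unitVectors n := by
    change ∑ i, (r⁻¹ * v i) ^ 2 = 1
    simp only [mul_pow, ← Finset.mul_sum, hr2]
    field_simp
  have huv : u ⬝ᵥ v = r := by
    simp only [u, Pi.smul_apply, smul_eq_mul, dotProduct, mul_assoc, ← Finset.mul_sum, ← sq,
      hr2]
    field_simp
  have hdist : ∑ i, (d i - u i) ^ 2 = 2 - 2 * r⁻¹ * (d ⬝ᵥ v) := by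
    have hterm : ∀ i, (d i - u i) ^ 2 = d i ^ 2 + u i ^ 2 - 2 * r⁻¹ * (d i * v i) := fun i => by
      simp only [u, Pi.smul_apply, smul_eq_mul]; ring
    simp only [hterm, Finset.sum_add_distrib, Finset.sum_sub_distrib, ← Finset.mul_sum,
      show ∑ i, d i ^ 2 = 1 from hd, show ∑ i, u i ^ 2 = 1 from hu, dotProduct]
    ring
  have hzero : ∑ i, (d i - u i) ^ 2 = 0 := by
    refine le_antisymm ?_ (by positivity)
    have : 1 ≤ r⁻¹ * (d ⬝ᵥ v) := by
      rw [le_inv_mul_iff₀ hr]; linarith [hmax u hu]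
    linarith
  funext i
  have := (Finset.sum_eq_zero_iff_of_nonneg fun i _ => sq_nonneg (d i - u i)).mp hzero i
    (Finset.mem_univ i)
  exact sub_eq_zero.mp (pow_eq_zero_iff two_ne_zero |>.mp this)

lemma eq_of_isMinOn_frobSq_sub_outer {E : Matrix (Fin n) (Fin N) ℝ}
    {c : Fin N → ℝ} (hEc : E *ᵥ c ≠ 0) {d₁ d₂ : Fin n → ℝ}
    (h₁ : IsMinOn (fun d => frobSq (E - outer d c)) (unitVectors n) d₁)
    (h₂ : IsMinOn (fun d => frobSq (E - outer d c)) (unitVectors n) d₂)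
    (hd₁ : d₁ ∈ unitVectors n) (hd₂ : d₂ ∈ unitVectors n) : d₁ = d₂ := by
  have hmax : ∀ d ∈ unitVectors n,
      IsMinOn (fun d => frobSq (E - outer d c)) (unitVectors n) d →
        ∀ d' ∈ unitVectors n, d' ⬝ᵥ E *ᵥ c ≤ d ⬝ᵥ E *ᵥ c := by
    intro d hd hmin d' hd'
    have := isMinOn_iff.mp hmin d' hd'
    simp only [frobSq_sub_outer, show ∑ p, d p ^ 2 = 1 from hd,
      show ∑ p, d' p ^ 2 = 1 from hd'] at this
    linarith
  rw [eq_smul_of_forall_dotProduct_le hEc hd₁ (hmax d₁ hd₁ h₁),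
    eq_smul_of_forall_dotProduct_le hEc hd₂ (hmax d₂ hd₂ h₂)]

lemma block_limit_eq_and_isMinOn {lam L : ℝ} (hlam : 0 < lam) (hL : lam < L)
    {E : Matrix (Fin n) (Fin N) ℝ} {d d' : Fin n → ℝ} {c c' : Fin N → ℝ}
    (hd : d ∈ unitVectors n) (hd' : d' ∈ unitVectors n) (hc : c ∈ closedBall 0 L)
    (hc' : c' ∈ closedBall 0 L) (hgap : ∀ i, |(Eᵀ *ᵥ d) i| ≠ lam)
    (hsparse : IsMinOn (sparseObj lam E d) (closedBall 0 L) c')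
    (hdict : IsMinOn (fun x => frobSq (E - outer x c')) (unitVectors n) d')
    (hval : sparseObj lam E d c = sparseObj lam E d c')
    (hval' : sparseObj lam E d' c' = sparseObj lam E d c') :
    c' = c ∧ outer d' c' = outer d c ∧ IsMinOn (sparseObj lam E d) (closedBall 0 L) c ∧
      IsMinOn (fun x => frobSq (E - outer x c)) (unitVectors n) d := by
  have hsparse_c : IsMinOn (sparseObj lam E d) (closedBall 0 L) c :=
    isMinOn_iff.mpr fun y hy => hval ▸ isMinOn_iff.mp hsparse y hy
  obtain rfl : c' = c :=
    (eq_hardThreshold_of_isMinOn_sparseObj hlam hL hd hgap hsparse hc').trans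
      (eq_hardThreshold_of_isMinOn_sparseObj hlam hL hd hgap hsparse_c hc).symm
  have hdict_d : IsMinOn (fun x => frobSq (E - outer x c')) (unitVectors n) d := by
    refine isMinOn_iff.mpr fun y hy => ?_
    have := isMinOn_iff.mp hdict y hy
    simp only [sparseObj, add_left_inj] at hval'
    simpa [hval'] using this
  refine ⟨rfl, ?_, hsparse_c, hdict_d⟩
  rcases eq_or_ne c' 0 with rfl | hc0
  · ext; simp [outer]
  · rw [eq_of_isMinOn_frobSq_sub_outer
      (mulVec_ne_zero_of_isMinOn_sparseObj (hlam.trans hL).le hd hsparse hc0) hdict hdict_d hd' hd]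

lemma isClosed_unitVectors : IsClosed (unitVectors n) :=
  isClosed_eq (by fun_prop) continuous_const

lemma norm_le_one_of_mem_unitVectors {d : Fin n → ℝ} (hd : d ∈ unitVectors n) : ‖d‖ ≤ 1 := by
  refine (pi_norm_le_iff_of_nonneg zero_le_one).mpr fun i => ?_
  rw [Real.norm_eq_abs, ← sq_le_one_iff_abs_le_one, ← show ∑ i, d i ^ 2 = 1 from hd]
  exact single_le_sum (f := fun i => d i ^ 2) (fun _ _ => sq_nonneg _) (mem_univ i)

noncomputable def dictObj (Y : Matrix (Fin n) (Fin N) ℝ) (lam : ℝ)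
    (C : Fin J → Fin N → ℝ) (D : Fin J → Fin n → ℝ) : ℝ :=
  frobSq (Y - ∑ j, outer (D j) (C j)) + lam ^ 2 * ∑ j, (l0 (C j) : ℝ)

noncomputable def atomResidual (Y : Matrix (Fin n) (Fin N) ℝ) (C : Fin J → Fin N → ℝ)
    (D : Fin J → Fin n → ℝ) (j : Fin J) : Matrix (Fin n) (Fin N) ℝ :=
  Y - ∑ k ∈ univ.erase j, outer (D k) (C k)

lemma atomResidual_eq (Y : Matrix (Fin n) (Fin N) ℝ) (C : Fin J → Fin N → ℝ)
    (D : Fin J → Fin n → ℝ) (j : Fin J) :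
    atomResidual Y C D j = Y - ∑ k, outer (D k) (C k) + outer (D j) (C j) := by
  rw [atomResidual, ← add_sum_erase _ _ (mem_univ j)]
  abel

lemma atomResidual_eq_sub_sum_lt_sub_sum_gt (Y : Matrix (Fin n) (Fin N) ℝ)
    (C : Fin J → Fin N → ℝ) (D : Fin J → Fin n → ℝ) (j : Fin J) :
    atomResidual Y C D j = Y - ∑ k ∈ univ.filter (fun k => k < j), outer (D k) (C k)
      - ∑ k ∈ univ.filter (fun k => j < k), outer (D k) (C k) := by
  have hsplit : univ.erase j = univ.filter (fun k => k < j) ∪ univ.filter (fun k => j < k) := by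
    ext k; simp [← lt_or_lt_iff_ne, or_comm]
  rw [atomResidual, hsplit, sum_union (disjoint_filter.mpr fun k _ h₁ h₂ => lt_asymm h₁ h₂)]
  abel

lemma atomResidual_update (Y : Matrix (Fin n) (Fin N) ℝ) (C : Fin J → Fin N → ℝ)
    (D : Fin J → Fin n → ℝ) (j : Fin J) (c : Fin N → ℝ) (d : Fin n → ℝ) :
    atomResidual Y (Function.update C j c) (Function.update D j d) j = atomResidual Y C D j := by
  refine congrArg (Y - ·) (sum_congr rfl fun k hk => ?_)
  rw [Function.update_of_ne (ne_of_mem_erase hk), Function.update_of_ne (ne_of_mem_erase hk)]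

lemma dictObj_eq (Y : Matrix (Fin n) (Fin N) ℝ) (lam : ℝ) (C : Fin J → Fin N → ℝ)
    (D : Fin J → Fin n → ℝ) (j : Fin J) :
    dictObj Y lam C D = sparseObj lam (atomResidual Y C D j) (D j) (C j)
      + lam ^ 2 * ∑ k ∈ univ.erase j, (l0 (C k) : ℝ) := by
  rw [dictObj, sparseObj, atomResidual, ← add_sum_erase _ _ (mem_univ j),
    ← add_sum_erase _ (fun k => (l0 (C k) : ℝ)) (mem_univ j), sub_add_eq_sub_sub_swap]
  ring

lemma dictObj_update (Y : Matrix (Fin n) (Fin N) ℝ) (lam : ℝ) (C : Fin J → Fin N → ℝ)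
    (D : Fin J → Fin n → ℝ) (j : Fin J) (c : Fin N → ℝ) (d : Fin n → ℝ) :
    dictObj Y lam (Function.update C j c) (Function.update D j d) =
      sparseObj lam (atomResidual Y C D j) d c + lam ^ 2 * ∑ k ∈ univ.erase j, (l0 (C k) : ℝ) := by
  rw [dictObj_eq Y lam _ _ j, atomResidual_update, Function.update_self, Function.update_self]
  congr 2
  exact sum_congr rfl fun k hk => by rw [Function.update_of_ne (ne_of_mem_erase hk)]

lemma dictObj_nonneg (Y : Matrix (Fin n) (Fin N) ℝ) (lam : ℝ) (C : Fin J → Fin N → ℝ)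
    (D : Fin J → Fin n → ℝ) : 0 ≤ dictObj Y lam C D :=
  add_nonneg (frobSq_nonneg _) (by positivity)

lemma isMinOn_dictObj_update_left {Y : Matrix (Fin n) (Fin N) ℝ} {lam : ℝ}
    {C : Fin J → Fin N → ℝ} {D : Fin J → Fin n → ℝ} {j : Fin J} {S : Set (Fin N → ℝ)}
    (hmin : IsMinOn (sparseObj lam (atomResidual Y C D j) (D j)) S (C j)) :
    IsMinOn (fun x => dictObj Y lam (Function.update C j x) D) S (C j) := by
  refine isMinOn_iff.mpr fun x hx => ?_
  have := isMinOn_iff.mp hmin x hx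
  simp only [Function.update_eq_self]
  conv_rhs => rw [← Function.update_eq_self j D]
  rw [dictObj_update, dictObj_eq _ _ _ _ j]
  linarith

lemma isMinOn_dictObj_update_right {Y : Matrix (Fin n) (Fin N) ℝ} {lam : ℝ}
    {C : Fin J → Fin N → ℝ} {D : Fin J → Fin n → ℝ} {j : Fin J} {S : Set (Fin n → ℝ)}
    (hmin : IsMinOn (fun x => frobSq (atomResidual Y C D j - outer x (C j))) S (D j)) :
    IsMinOn (fun x => dictObj Y lam C (Function.update D j x)) S (D j) := by
  refine isMinOn_iff.mpr fun x hx => ?_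
  have := isMinOn_iff.mp hmin x hx
  simp only [Function.update_eq_self]
  conv_rhs => rw [← Function.update_eq_self j C]
  rw [dictObj_update, dictObj_eq _ _ _ _ j, sparseObj, sparseObj]
  linarith

lemma tendsto_atomResidual {l : Filter ι} (Y : Matrix (Fin n) (Fin N) ℝ)
    {C : ι → Fin J → Fin N → ℝ} {D : ι → Fin J → Fin n → ℝ} {C₀ : Fin J → Fin N → ℝ}
    {D₀ : Fin J → Fin n → ℝ} (hC : Tendsto C l (𝓝 C₀)) (hD : Tendsto D l (𝓝 D₀)) (j : Fin J) :
    Tendsto (fun k => atomResidual Y (C k) (D k) j) l (𝓝 (atomResidual Y C₀ D₀ j)) :=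
  tendsto_const_nhds.sub <| tendsto_finsetSum _ fun k _ =>
    (continuous_outer.tendsto _).comp
      ((tendsto_pi_nhds.mp hD k).prodMk_nhds (tendsto_pi_nhds.mp hC k))

-- The state of a sweep from `A` to `B` after `m` block updates.
def splice (A B : Fin J → α) (m : ℕ) : Fin J → α :=
  fun k => if (k : ℕ) < m then B k else A k

lemma splice_zero (A B : Fin J → α) : splice A B 0 = A := by
  funext k; simp [splice]

lemma splice_of_le (A B : Fin J → α) {m : ℕ} (hm : J ≤ m) : splice A B m = B := by
  funext k; simp [splice, k.isLt.trans_le hm]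

lemma splice_eq_update_self (A B : Fin J → α) (j : Fin J) :
    splice A B j = Function.update (splice A B j) j (A j) := by
  rw [eq_comm, Function.update_eq_iff]
  simp [splice]

lemma splice_succ (A B : Fin J → α) (j : Fin J) :
    splice A B (j + 1) = Function.update (splice A B j) j (B j) := by
  funext k
  rcases eq_or_ne k j with rfl | hk
  · simp [splice]
  · have : (k : ℕ) ≠ j := Fin.val_ne_of_ne hk
    simp only [splice, Function.update_of_ne hk]
    congr 1
    exact propext (by omega)

lemma tendsto_splice [TopologicalSpace α] {l : Filter ι} {A B : ι → Fin J → α}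
    {A₀ B₀ : Fin J → α} (hA : Tendsto A l (𝓝 A₀)) (hB : Tendsto B l (𝓝 B₀)) (m : ℕ) :
    Tendsto (fun k => splice (A k) (B k) m) l (𝓝 (splice A₀ B₀ m)) :=
  tendsto_pi_nhds.mpr fun k => by
    unfold splice; split_ifs
    exacts [tendsto_pi_nhds.mp hB k, tendsto_pi_nhds.mp hA k]

lemma dictObj_splice (Y : Matrix (Fin n) (Fin N) ℝ) (lam : ℝ) (A B : Fin J → Fin N → ℝ)
    (A' B' : Fin J → Fin n → ℝ) (j : Fin J) :
    dictObj Y lam (splice A B j) (splice A' B' j) =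
      sparseObj lam (atomResidual Y (splice A B j) (splice A' B' j) j) (A' j) (A j)
        + lam ^ 2 * ∑ k ∈ univ.erase j, (l0 (splice A B j k) : ℝ) := by
  conv_lhs => rw [splice_eq_update_self A B j, splice_eq_update_self A' B' j]
  rw [dictObj_update]

lemma dictObj_splice_succ (Y : Matrix (Fin n) (Fin N) ℝ) (lam : ℝ) (A B : Fin J → Fin N → ℝ)
    (A' B' : Fin J → Fin n → ℝ) (j : Fin J) :
    dictObj Y lam (splice A B (j + 1)) (splice A' B' (j + 1)) =
      sparseObj lam (atomResidual Y (splice A B j) (splice A' B' j) j) (B' j) (B j)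
        + lam ^ 2 * ∑ k ∈ univ.erase j, (l0 (splice A B j k) : ℝ) := by
  rw [splice_succ, splice_succ, dictObj_update]

lemma atomResidual_splice (Y : Matrix (Fin n) (Fin N) ℝ) (A B : Fin J → Fin N → ℝ)
    (A' B' : Fin J → Fin n → ℝ) (j : Fin J) :
    atomResidual Y (splice A B j) (splice A' B' j) j =
      Y - ∑ k ∈ univ.filter (fun k => k < j), outer (B' k) (B k)
        - ∑ k ∈ univ.filter (fun k => j < k), outer (A' k) (A k) := by
  rw [atomResidual_eq_sub_sum_lt_sub_sum_gt]
  refine congrArg₂ (fun S T => Y - S - T) (sum_congr rfl fun k hk => ?_)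
    (sum_congr rfl fun k hk => ?_)
  · have hkj : (k : ℕ) < j := (mem_filter.mp hk).2
    simp [splice, hkj]
  · have hkj : ¬(k : ℕ) < j := not_lt.mpr (mem_filter.mp hk).2.le
    simp [splice, hkj]

lemma atomResidual_splice_of_outer_eq (Y : Matrix (Fin n) (Fin N) ℝ) {A B : Fin J → Fin N → ℝ}
    {A' B' : Fin J → Fin n → ℝ} {j : Fin J}
    (hprev : ∀ k < j, outer (B' k) (B k) = outer (A' k) (A k)) :
    atomResidual Y (splice A B j) (splice A' B' j) j = atomResidual Y A A' j := by
  rw [atomResidual_splice, atomResidual_eq_sub_sum_lt_sub_sum_gt]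
  congr 2
  exact sum_congr rfl fun k hk => hprev k (mem_filter.mp hk).2

lemma tendsto_iInf_of_le_of_le {u : ℕ → ℝ} (hu : Antitone u) (hbdd : BddBelow (Set.range u))
    {ψ : ℕ → ℕ} (hψ : Tendsto ψ atTop atTop) {w : ℕ → ℝ} (hlo : ∀ k, u (ψ k + 1) ≤ w k)
    (hhi : ∀ k, w k ≤ u (ψ k)) : Tendsto w atTop (𝓝 (⨅ t, u t)) :=
  have hlim := tendsto_atTop_ciInf hu hbdd
  tendsto_of_tendsto_of_tendsto_of_le_of_le (hlim.comp ((tendsto_add_atTop_nat 1).comp hψ))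
    (hlim.comp hψ) hlo hhi

lemma eventually_l0_eq {l : Filter ι} {lam : ℝ} (hlam : 0 < lam)
    {x : ι → Fin N → ℝ} {y : Fin N → ℝ} (hx : Tendsto x l (𝓝 y))
    (hgap : ∀ k i, x k i = 0 ∨ lam ≤ |x k i|) : ∀ᶠ k in l, l0 (x k) = l0 y := by
  have hsupp : ∀ i, ∀ᶠ k in l, (x k i ≠ 0 ↔ y i ≠ 0) := by
    intro i
    have hxi := tendsto_pi_nhds.mp hx i
    by_cases hy : y i = 0
    · filter_upwards [hxi.abs.eventually_lt_const (by simpa [hy] using hlam)] with k hk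
      simpa [hy] using (hgap k i).resolve_right hk.not_ge
    · filter_upwards [hxi.eventually_ne hy] with k hk
      simp [hk, hy]
  filter_upwards [eventually_all.mpr hsupp] with k hk
  exact congrArg card (filter_congr fun i _ => hk i)

lemma tendsto_frobSq_sub_outer {l : Filter ι}
    {E : ι → Matrix (Fin n) (Fin N) ℝ} {d : ι → Fin n → ℝ} {c : ι → Fin N → ℝ}
    {E₀ : Matrix (Fin n) (Fin N) ℝ} {d₀ : Fin n → ℝ} {c₀ : Fin N → ℝ}
    (hE : Tendsto E l (𝓝 E₀)) (hd : Tendsto d l (𝓝 d₀)) (hc : Tendsto c l (𝓝 c₀)) :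
    Tendsto (fun k => frobSq (E k - outer (d k) (c k))) l (𝓝 (frobSq (E₀ - outer d₀ c₀))) := by
  have houter : Tendsto (fun k => outer (d k) (c k)) l (𝓝 (outer d₀ c₀)) :=
    (continuous_outer.tendsto (d₀, c₀)).comp (hd.prodMk_nhds hc)
  exact (continuous_frobSq.tendsto _).comp (hE.sub houter)

lemma tendsto_sparseObj {l : Filter ι} (lam : ℝ)
    {E : ι → Matrix (Fin n) (Fin N) ℝ} {d : ι → Fin n → ℝ} {c : ι → Fin N → ℝ}
    {E₀ : Matrix (Fin n) (Fin N) ℝ} {d₀ : Fin n → ℝ} {c₀ : Fin N → ℝ}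
    (hE : Tendsto E l (𝓝 E₀)) (hd : Tendsto d l (𝓝 d₀)) (hc : Tendsto c l (𝓝 c₀))
    (hl0 : ∀ᶠ k in l, l0 (c k) = l0 c₀) :
    Tendsto (fun k => sparseObj lam (E k) (d k) (c k)) l (𝓝 (sparseObj lam E₀ d₀ c₀)) := by
  refine (tendsto_frobSq_sub_outer hE hd hc).add (tendsto_const_nhds.congr' ?_)
  filter_upwards [hl0] with k hk
  rw [hk]

noncomputable def sweepResidual (Y : Matrix (Fin n) (Fin N) ℝ) (c : ℕ → Fin J → Fin N → ℝ)
    (d : ℕ → Fin J → Fin n → ℝ) (t : ℕ) (j : Fin J) : Matrix (Fin n) (Fin N) ℝ :=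
  atomResidual Y (splice (c t) (c (t + 1)) j) (splice (d t) (d (t + 1)) j) j

noncomputable def sweepSparsity (c : ℕ → Fin J → Fin N → ℝ) (t : ℕ) (j : Fin J) : ℝ :=
  ∑ k ∈ univ.erase j, (l0 (splice (c t) (c (t + 1)) j k) : ℝ)

structure IsSOUPIterates (Y : Matrix (Fin n) (Fin N) ℝ) (lam L : ℝ)
    (c : ℕ → Fin J → Fin N → ℝ) (d : ℕ → Fin J → Fin n → ℝ) : Prop where
  unit : ∀ t j, d t j ∈ unitVectors n
  bounded : ∀ t j, c t j ∈ closedBall 0 L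
  gap : ∀ t j i, c t j i = 0 ∨ lam ≤ |c t j i|
  sparse_min : ∀ t j,
    IsMinOn (sparseObj lam (sweepResidual Y c d t j) (d t j)) (closedBall 0 L) (c (t + 1) j)
  dict_min : ∀ t j, IsMinOn (fun d' => frobSq (sweepResidual Y c d t j - outer d' (c (t + 1) j)))
    (unitVectors n) (d (t + 1) j)

namespace IsSOUPIterates

variable {Y : Matrix (Fin n) (Fin N) ℝ} {lam L : ℝ} {c : ℕ → Fin J → Fin N → ℝ}
  {d : ℕ → Fin J → Fin n → ℝ} {ψ : ℕ → ℕ} {C C' : Fin J → Fin N → ℝ}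
  {D D' : Fin J → Fin n → ℝ} {E : Matrix (Fin n) (Fin N) ℝ}

lemma dict_update_le (h : IsSOUPIterates Y lam L c d) (t : ℕ) (j : Fin J) :
    sparseObj lam (sweepResidual Y c d t j) (d (t + 1) j) (c (t + 1) j) ≤
      sparseObj lam (sweepResidual Y c d t j) (d t j) (c (t + 1) j) := by
  unfold sparseObj
  linarith [isMinOn_iff.mp (h.dict_min t j) (d t j) (h.unit t j)]

lemma sparse_update_le (h : IsSOUPIterates Y lam L c d) (t : ℕ) (j : Fin J) :
    sparseObj lam (sweepResidual Y c d t j) (d t j) (c (t + 1) j) ≤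
      sparseObj lam (sweepResidual Y c d t j) (d t j) (c t j) :=
  isMinOn_iff.mp (h.sparse_min t j) (c t j) (h.bounded t j)

lemma antitone_dictObj_splice (h : IsSOUPIterates Y lam L c d) (t : ℕ) :
    Antitone fun m => dictObj Y lam (splice (c t) (c (t + 1)) m) (splice (d t) (d (t + 1)) m) := by
  refine antitone_nat_of_succ_le fun m => ?_
  rcases lt_or_ge m J with hm | hm
  · let j : Fin J := ⟨m, hm⟩
    change dictObj Y lam (splice _ _ (j + 1)) (splice _ _ (j + 1)) ≤
      dictObj Y lam (splice _ _ j) (splice _ _ j)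
    rw [dictObj_splice_succ, dictObj_splice]
    exact add_le_add_left ((h.dict_update_le t j).trans (h.sparse_update_le t j)) _
  · simp only [splice_of_le _ _ hm, splice_of_le _ _ (hm.trans m.le_succ), le_refl]

lemma dictObj_succ_le (h : IsSOUPIterates Y lam L c d) (t : ℕ) (j : Fin J) :
    dictObj Y lam (c (t + 1)) (d (t + 1)) ≤
      sparseObj lam (sweepResidual Y c d t j) (d (t + 1) j) (c (t + 1) j)
        + lam ^ 2 * sweepSparsity c t j := by
  have := h.antitone_dictObj_splice t (show (j : ℕ) + 1 ≤ J from j.isLt)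
  dsimp only at this
  rwa [splice_of_le _ _ le_rfl, splice_of_le _ _ le_rfl, dictObj_splice_succ] at this

lemma le_dictObj (h : IsSOUPIterates Y lam L c d) (t : ℕ) (j : Fin J) :
    sparseObj lam (sweepResidual Y c d t j) (d t j) (c t j) + lam ^ 2 * sweepSparsity c t j ≤
      dictObj Y lam (c t) (d t) := by
  have := h.antitone_dictObj_splice t (Nat.zero_le j)
  dsimp only at this
  rwa [splice_zero, splice_zero, dictObj_splice] at this

lemma antitone_dictObj (h : IsSOUPIterates Y lam L c d) :
    Antitone fun t => dictObj Y lam (c t) (d t) := by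
  refine antitone_nat_of_succ_le fun t => ?_
  have := h.antitone_dictObj_splice t (Nat.zero_le J)
  dsimp only at this
  rwa [splice_zero, splice_zero, splice_of_le _ _ le_rfl, splice_of_le _ _ le_rfl] at this

lemma exists_subseq_tendsto (h : IsSOUPIterates Y lam L c d) (hL : 0 ≤ L) (x : ℕ → ℕ) :
    ∃ (C' : Fin J → Fin N → ℝ) (D' : Fin J → Fin n → ℝ) (θ : ℕ → ℕ), StrictMono θ ∧
      Tendsto (fun k => (c (x (θ k)), d (x (θ k)))) atTop (𝓝 (C', D')) := by
  have hmem : ∀ k, (c (x k), d (x k)) ∈ closedBall 0 L ×ˢ closedBall 0 1 := fun k =>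
    ⟨mem_closedBall_zero_iff.mpr <| (pi_norm_le_iff_of_nonneg hL).mpr fun j =>
        mem_closedBall_zero_iff.mp (h.bounded _ j),
      mem_closedBall_zero_iff.mpr <| (pi_norm_le_iff_of_nonneg zero_le_one).mpr fun j =>
        norm_le_one_of_mem_unitVectors (h.unit _ j)⟩
  obtain ⟨⟨C', D'⟩, -, θ, hθ, hlim⟩ :=
    ((isCompact_closedBall _ _).prod (isCompact_closedBall _ _)).tendsto_subseq hmem
  exact ⟨C', D', θ, hθ, hlim⟩

lemma tendsto_sweepResidual
    (hcur : Tendsto (fun k => (c (ψ k), d (ψ k))) atTop (𝓝 (C, D)))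
    (hnext : Tendsto (fun k => (c (ψ k + 1), d (ψ k + 1))) atTop (𝓝 (C', D'))) (j : Fin J)
    (hprev : ∀ k < j, outer (D' k) (C' k) = outer (D k) (C k)) :
    Tendsto (fun k => sweepResidual Y c d (ψ k) j) atTop (𝓝 (atomResidual Y C D j)) := by
  rw [← atomResidual_splice_of_outer_eq Y hprev]
  exact tendsto_atomResidual Y (tendsto_splice hcur.fst_nhds hnext.fst_nhds j)
    (tendsto_splice hcur.snd_nhds hnext.snd_nhds j) j

lemma isMinOn_sparseObj_limit (h : IsSOUPIterates Y lam L c d) (hlam : 0 < lam)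
    (hcur : Tendsto (fun k => (c (ψ k), d (ψ k))) atTop (𝓝 (C, D)))
    (hnext : Tendsto (fun k => (c (ψ k + 1), d (ψ k + 1))) atTop (𝓝 (C', D'))) {j : Fin J}
    (hres : Tendsto (fun k => sweepResidual Y c d (ψ k) j) atTop (𝓝 E)) :
    IsMinOn (sparseObj lam E (D j)) (closedBall 0 L) (C' j) := by
  have hd := tendsto_pi_nhds.mp hcur.snd_nhds j
  have hc := tendsto_pi_nhds.mp hnext.fst_nhds j
  refine isMinOn_iff.mpr fun x hx => le_of_tendsto_of_tendsto'
    (tendsto_sparseObj lam hres hd hc (eventually_l0_eq hlam hc fun k => h.gap _ j))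
    (tendsto_sparseObj lam hres hd tendsto_const_nhds (.of_forall fun _ => rfl))
    fun k => isMinOn_iff.mp (h.sparse_min (ψ k) j) x hx

lemma isMinOn_frobSq_limit (h : IsSOUPIterates Y lam L c d)
    (hnext : Tendsto (fun k => (c (ψ k + 1), d (ψ k + 1))) atTop (𝓝 (C', D'))) {j : Fin J}
    (hres : Tendsto (fun k => sweepResidual Y c d (ψ k) j) atTop (𝓝 E)) :
    IsMinOn (fun x => frobSq (E - outer x (C' j))) (unitVectors n) (D' j) := by
  have hd := tendsto_pi_nhds.mp hnext.snd_nhds j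
  have hc := tendsto_pi_nhds.mp hnext.fst_nhds j
  exact isMinOn_iff.mpr fun x hx => le_of_tendsto_of_tendsto'
    (tendsto_frobSq_sub_outer hres hd hc) (tendsto_frobSq_sub_outer hres tendsto_const_nhds hc)
    fun k => isMinOn_iff.mp (h.dict_min (ψ k) j) x hx

lemma eventually_sweepSparsity_eq (h : IsSOUPIterates Y lam L c d) (hlam : 0 < lam)
    (hcur : Tendsto (fun k => (c (ψ k), d (ψ k))) atTop (𝓝 (C, D)))
    (hnext : Tendsto (fun k => (c (ψ k + 1), d (ψ k + 1))) atTop (𝓝 (C', D'))) (j : Fin J) :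
    ∀ᶠ k in atTop,
      sweepSparsity c (ψ k) j = ∑ k' ∈ univ.erase j, (l0 (splice C C' j k') : ℝ) := by
  have hspl := tendsto_splice hcur.fst_nhds hnext.fst_nhds j
  have hcol : ∀ k', ∀ᶠ k in atTop,
      l0 (splice (c (ψ k)) (c (ψ k + 1)) j k') = l0 (splice C C' j k') := fun k' =>
    eventually_l0_eq hlam (tendsto_pi_nhds.mp hspl k') fun k i => by
      unfold splice; split_ifs <;> exact h.gap _ k' i
  filter_upwards [eventually_all.mpr hcol] with k hk
  exact sum_congr rfl fun k' _ => by rw [hk k']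

lemma sparseObj_add_eq_iInf (h : IsSOUPIterates Y lam L c d) (hlam : 0 < lam)
    (hψ : Tendsto ψ atTop atTop) (hcur : Tendsto (fun k => (c (ψ k), d (ψ k))) atTop (𝓝 (C, D)))
    (hnext : Tendsto (fun k => (c (ψ k + 1), d (ψ k + 1))) atTop (𝓝 (C', D'))) {j : Fin J}
    (hres : Tendsto (fun k => sweepResidual Y c d (ψ k) j) atTop (𝓝 E))
    {dk : ℕ → Fin n → ℝ} {ck : ℕ → Fin N → ℝ} {d₀ : Fin n → ℝ} {c₀ : Fin N → ℝ}
    (hd : Tendsto dk atTop (𝓝 d₀)) (hc : Tendsto ck atTop (𝓝 c₀))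
    (hgap : ∀ k i, ck k i = 0 ∨ lam ≤ |ck k i|)
    (hlo : ∀ k, dictObj Y lam (c (ψ k + 1)) (d (ψ k + 1)) ≤
      sparseObj lam (sweepResidual Y c d (ψ k) j) (dk k) (ck k)
        + lam ^ 2 * sweepSparsity c (ψ k) j)
    (hhi : ∀ k, sparseObj lam (sweepResidual Y c d (ψ k) j) (dk k) (ck k)
        + lam ^ 2 * sweepSparsity c (ψ k) j ≤ dictObj Y lam (c (ψ k)) (d (ψ k))) :
    sparseObj lam E d₀ c₀ + lam ^ 2 * ∑ k' ∈ univ.erase j, (l0 (splice C C' j k') : ℝ) =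
      ⨅ t, dictObj Y lam (c t) (d t) := by
  have hbdd : BddBelow (Set.range fun t => dictObj Y lam (c t) (d t)) :=
    ⟨0, by rintro _ ⟨t, rfl⟩; exact dictObj_nonneg _ _ _ _⟩
  refine tendsto_nhds_unique ?_ (tendsto_iInf_of_le_of_le h.antitone_dictObj hbdd hψ hlo hhi)
  refine (tendsto_sparseObj lam hres hd hc (eventually_l0_eq hlam hc hgap)).add
    (tendsto_const_nhds.congr' ?_)
  filter_upwards [h.eventually_sweepSparsity_eq hlam hcur hnext j] with k hk
  rw [hk]

lemma sparseObj_limit_eq (h : IsSOUPIterates Y lam L c d) (hlam : 0 < lam)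
    (hψ : Tendsto ψ atTop atTop) (hcur : Tendsto (fun k => (c (ψ k), d (ψ k))) atTop (𝓝 (C, D)))
    (hnext : Tendsto (fun k => (c (ψ k + 1), d (ψ k + 1))) atTop (𝓝 (C', D'))) {j : Fin J}
    (hres : Tendsto (fun k => sweepResidual Y c d (ψ k) j) atTop (𝓝 E)) :
    sparseObj lam E (D j) (C j) = sparseObj lam E (D j) (C' j) ∧
      sparseObj lam E (D' j) (C' j) = sparseObj lam E (D j) (C' j) := by
  have hd := tendsto_pi_nhds.mp hcur.snd_nhds j
  have hc := tendsto_pi_nhds.mp hcur.fst_nhds j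
  have hd' := tendsto_pi_nhds.mp hnext.snd_nhds j
  have hc' := tendsto_pi_nhds.mp hnext.fst_nhds j
  have hdict k := add_le_add_left (h.dict_update_le (ψ k) j) (lam ^ 2 * sweepSparsity c (ψ k) j)
  have hsparse k :=
    add_le_add_left (h.sparse_update_le (ψ k) j) (lam ^ 2 * sweepSparsity c (ψ k) j)
  have h₁ := h.sparseObj_add_eq_iInf hlam hψ hcur hnext hres hd hc (fun _ => h.gap _ j)
    (fun k => ((h.dictObj_succ_le _ j).trans (hdict k)).trans (hsparse k))
    (fun k => h.le_dictObj _ j)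
  have h₂ := h.sparseObj_add_eq_iInf hlam hψ hcur hnext hres hd hc' (fun _ => h.gap _ j)
    (fun k => (h.dictObj_succ_le _ j).trans (hdict k))
    (fun k => (hsparse k).trans (h.le_dictObj _ j))
  have h₃ := h.sparseObj_add_eq_iInf hlam hψ hcur hnext hres hd' hc' (fun _ => h.gap _ j)
    (fun k => h.dictObj_succ_le _ j)
    (fun k => ((hdict k).trans (hsparse k)).trans (h.le_dictObj _ j))
  constructor <;> linarith

lemma mem_closedBall_of_tendsto (h : IsSOUPIterates Y lam L c d) {x : ℕ → ℕ}
    {C₀ : Fin J → Fin N → ℝ} (hx : Tendsto (fun k => c (x k)) atTop (𝓝 C₀)) (j : Fin J) :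
    C₀ j ∈ closedBall 0 L :=
  isClosed_closedBall.mem_of_tendsto (tendsto_pi_nhds.mp hx j) (.of_forall fun _ => h.bounded _ j)

lemma mem_unitVectors_of_tendsto (h : IsSOUPIterates Y lam L c d) {x : ℕ → ℕ}
    {D₀ : Fin J → Fin n → ℝ} (hx : Tendsto (fun k => d (x k)) atTop (𝓝 D₀)) (j : Fin J) :
    D₀ j ∈ unitVectors n :=
  isClosed_unitVectors.mem_of_tendsto (tendsto_pi_nhds.mp hx j) (.of_forall fun _ => h.unit _ j)

lemma limit_block_optimal (h : IsSOUPIterates Y lam L c d) (hlam : 0 < lam) (hL : lam < L)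
    (hψ : Tendsto ψ atTop atTop) (hcur : Tendsto (fun k => (c (ψ k), d (ψ k))) atTop (𝓝 (C, D)))
    (hnext : Tendsto (fun k => (c (ψ k + 1), d (ψ k + 1))) atTop (𝓝 (C', D'))) {j : Fin J}
    (hne : ∀ i, |((atomResidual Y C D j)ᵀ *ᵥ D j) i| ≠ lam)
    (hprev : ∀ k < j, outer (D' k) (C' k) = outer (D k) (C k)) :
    C' j = C j ∧ outer (D' j) (C' j) = outer (D j) (C j) ∧
      IsMinOn (sparseObj lam (atomResidual Y C D j) (D j)) (closedBall 0 L) (C j) ∧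
      IsMinOn (fun x => frobSq (atomResidual Y C D j - outer x (C j))) (unitVectors n) (D j) :=
  have hres := tendsto_sweepResidual hcur hnext j hprev
  have hval := h.sparseObj_limit_eq hlam hψ hcur hnext hres
  block_limit_eq_and_isMinOn hlam hL (h.mem_unitVectors_of_tendsto hcur.snd_nhds j)
    (h.mem_unitVectors_of_tendsto hnext.snd_nhds j) (h.mem_closedBall_of_tendsto hcur.fst_nhds j)
    (h.mem_closedBall_of_tendsto hnext.fst_nhds j) hne
    (h.isMinOn_sparseObj_limit hlam hcur hnext hres) (h.isMinOn_frobSq_limit hnext hres)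
    hval.1 hval.2

theorem coordinatewise_optimal (h : IsSOUPIterates Y lam L c d) (hlam : 0 < lam)
    (hL : lam < L) {φ : ℕ → ℕ} (hφ : StrictMono φ)
    (hacc : Tendsto (fun k => (c (φ k), d (φ k))) atTop (𝓝 (C, D)))
    (hne : ∀ j i, |((atomResidual Y C D j)ᵀ *ᵥ D j) i| ≠ lam) (j : Fin J) :
    (C j ∈ closedBall 0 L ∧
      IsMinOn (fun x => dictObj Y lam (Function.update C j x) D) (closedBall 0 L) (C j)) ∧
    (D j ∈ unitVectors n ∧
      IsMinOn (fun x => dictObj Y lam C (Function.update D j x)) (unitVectors n) (D j)) := by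
  obtain ⟨C', D', θ, hθ, hnext⟩ := h.exists_subseq_tendsto (hlam.trans hL).le (φ · + 1)
  have hψ : Tendsto (fun k => φ (θ k)) atTop atTop := (hφ.comp hθ).tendsto_atTop
  have hcur : Tendsto (fun k => (c (φ (θ k)), d (φ (θ k)))) atTop (𝓝 (C, D)) :=
    hacc.comp hθ.tendsto_atTop
  have hagree : ∀ j, outer (D' j) (C' j) = outer (D j) (C j) :=
    Fin.strong_induction_on fun j ih => (h.limit_block_optimal hlam hL hψ hcur hnext (hne j) ih).2.1
  obtain ⟨-, -, hCmin, hDmin⟩ :=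
    h.limit_block_optimal hlam hL hψ hcur hnext (hne j) fun k _ => hagree k
  exact ⟨⟨h.mem_closedBall_of_tendsto hcur.fst_nhds j, isMinOn_dictObj_update_left hCmin⟩,
    ⟨h.mem_unitVectors_of_tendsto hcur.snd_nhds j, isMinOn_dictObj_update_right hDmin⟩⟩

end IsSOUPIterates

end

theorem stmt16_general {n N J : ℕ}
    (Y : Matrix (Fin n) (Fin N) ℝ) (lam L : ℝ) (hlam : 0 < lam) (hL : lam < L)
    (f : (Fin J → Fin N → ℝ) → (Fin J → Fin n → ℝ) → ℝ)
    (hf : f = fun C D =>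
      frobSq (Y - ∑ j, outer (D j) (C j)) + lam ^ 2 * ∑ j, (l0 (C j) : ℝ))
    (c : ℕ → Fin J → Fin N → ℝ) (d : ℕ → Fin J → Fin n → ℝ)
    (hdunit : ∀ t j, Real.sqrt (∑ i, (d t j i) ^ 2) = 1)
    (hcL : ∀ t j i, |c t j i| ≤ L)
    (hgap : ∀ t j i, c t j i = 0 ∨ lam ≤ |c t j i|)
    (Ej : ℕ → Fin J → Matrix (Fin n) (Fin N) ℝ)
    (hEj : Ej = fun t j => Y
      - ∑ k ∈ Finset.univ.filter (fun k => k < j), outer (d (t + 1) k) (c (t + 1) k)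
      - ∑ k ∈ Finset.univ.filter (fun k => j < k), outer (d t k) (c t k))
    (ha : ∀ t j, ∀ cc : Fin N → ℝ, (∀ i, |cc i| ≤ L) →
      frobSq (Ej t j - outer (d t j) (c (t + 1) j)) + lam ^ 2 * (l0 (c (t + 1) j) : ℝ) ≤
      frobSq (Ej t j - outer (d t j) cc) + lam ^ 2 * (l0 cc : ℝ))
    (hb : ∀ t j, ∀ dd : Fin n → ℝ, Real.sqrt (∑ i, (dd i) ^ 2) = 1 →
      frobSq (Ej t j - outer (d (t + 1) j) (c (t + 1) j)) ≤
      frobSq (Ej t j - outer dd (c (t + 1) j)))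
    (hnotie : ∀ (C : Fin J → Fin N → ℝ) (D : Fin J → Fin n → ℝ),
      (∃ φ : ℕ → ℕ, StrictMono φ ∧
        Tendsto (fun k => (c (φ k), d (φ k))) atTop (nhds (C, D))) →
      ∀ j i, |(Y - ∑ k, outer (D k) (C k) + outer (D j) (C j))ᵀ.mulVec (D j) i| ≠ lam) :
    ∀ (Cstar : Fin J → Fin N → ℝ) (Dstar : Fin J → Fin n → ℝ),
      (∃ φ : ℕ → ℕ, StrictMono φ ∧
        Tendsto (fun k => (c (φ k), d (φ k))) atTop (nhds (Cstar, Dstar))) →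
      ∀ j : Fin J,
        ((∀ i, |Cstar j i| ≤ L) ∧
          ∀ cc : Fin N → ℝ, (∀ i, |cc i| ≤ L) →
            f Cstar Dstar ≤ f (Function.update Cstar j cc) Dstar) ∧
        (Real.sqrt (∑ i, (Dstar j i) ^ 2) = 1 ∧
          ∀ dd : Fin n → ℝ, Real.sqrt (∑ i, (dd i) ^ 2) = 1 →
            f Cstar Dstar ≤ f Cstar (Function.update Dstar j dd)) := by
  subst hf hEj
  have hball : ∀ {x : Fin N → ℝ}, x ∈ closedBall 0 L ↔ ∀ i, |x i| ≤ L :=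
    mem_closedBall_zero_iff_forall_abs_le (hlam.trans hL).le
  have h : IsSOUPIterates Y lam L c d :=
    { unit := fun t j => Real.sqrt_eq_one.mp (hdunit t j)
      bounded := fun t j => hball.mpr (hcL t j)
      gap := hgap
      sparse_min := fun t j => isMinOn_iff.mpr fun x hx => by
        simpa only [sparseObj, sweepResidual, atomResidual_splice] using ha t j x (hball.mp hx)
      dict_min := fun t j => isMinOn_iff.mpr fun x hx => by
        simpa only [sweepResidual, atomResidual_splice] using hb t j x (Real.sqrt_eq_one.mpr hx) }
  rintro C D ⟨φ, hφ, hacc⟩ j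
  have hne : ∀ j i, |((atomResidual Y C D j)ᵀ *ᵥ D j) i| ≠ lam := fun j => by
    simpa only [atomResidual_eq] using hnotie C D ⟨φ, hφ, hacc⟩ j
  obtain ⟨⟨hCj, hCmin⟩, hDj, hDmin⟩ := h.coordinatewise_optimal hlam hL hφ hacc hne j
  refine ⟨⟨hball.mp hCj, fun x hx => ?_⟩, Real.sqrt_eq_one.mpr hDj, fun x hx => ?_⟩
  · simpa only [dictObj, Function.update_eq_self] using isMinOn_iff.mp hCmin x (hball.mpr hx)
  · simpa only [dictObj, Function.update_eq_self] using
      isMinOn_iff.mp hDmin x (Real.sqrt_eq_one.mp hx)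

theorem stmt16 {n N J : ℕ} (hn : 0 < n) (hN : 0 < N) (hJ : 0 < J)
    (Y : Matrix (Fin n) (Fin N) ℝ) (lam L : ℝ) (hlam : 0 < lam) (hL : lam < L)
    (f : (Fin J → Fin N → ℝ) → (Fin J → Fin n → ℝ) → ℝ)
    (hf : f = fun C D =>
      frobSq (Y - ∑ j, outer (D j) (C j)) + lam ^ 2 * ∑ j, (l0 (C j) : ℝ))
    (c : ℕ → Fin J → Fin N → ℝ) (d : ℕ → Fin J → Fin n → ℝ)
    (hdunit : ∀ t j, Real.sqrt (∑ i, (d t j i) ^ 2) = 1)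
    (hcL : ∀ t j i, |c t j i| ≤ L)
    (hgap : ∀ t j i, c t j i = 0 ∨ lam ≤ |c t j i|)
    (Ej : ℕ → Fin J → Matrix (Fin n) (Fin N) ℝ)
    (hEj : Ej = fun t j => Y
      - ∑ k ∈ Finset.univ.filter (fun k => k < j), outer (d (t + 1) k) (c (t + 1) k)
      - ∑ k ∈ Finset.univ.filter (fun k => j < k), outer (d t k) (c t k))
    (ha : ∀ t j, ∀ cc : Fin N → ℝ, (∀ i, |cc i| ≤ L) →
      frobSq (Ej t j - outer (d t j) (c (t + 1) j)) + lam ^ 2 * (l0 (c (t + 1) j) : ℝ) ≤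
      frobSq (Ej t j - outer (d t j) cc) + lam ^ 2 * (l0 cc : ℝ))
    (hb : ∀ t j, ∀ dd : Fin n → ℝ, Real.sqrt (∑ i, (dd i) ^ 2) = 1 →
      frobSq (Ej t j - outer (d (t + 1) j) (c (t + 1) j)) ≤
      frobSq (Ej t j - outer dd (c (t + 1) j)))
    (hnotie : ∀ (C : Fin J → Fin N → ℝ) (D : Fin J → Fin n → ℝ),
      (∃ φ : ℕ → ℕ, StrictMono φ ∧
        Tendsto (fun k => (c (φ k), d (φ k))) atTop (nhds (C, D))) →
      ∀ j i, |(Y - ∑ k, outer (D k) (C k) + outer (D j) (C j))ᵀ.mulVec (D j) i| ≠ lam) :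
    ∀ (Cstar : Fin J → Fin N → ℝ) (Dstar : Fin J → Fin n → ℝ),
      (∃ φ : ℕ → ℕ, StrictMono φ ∧
        Tendsto (fun k => (c (φ k), d (φ k))) atTop (nhds (Cstar, Dstar))) →
      ∀ j : Fin J,
        ((∀ i, |Cstar j i| ≤ L) ∧
          ∀ cc : Fin N → ℝ, (∀ i, |cc i| ≤ L) →
            f Cstar Dstar ≤ f (Function.update Cstar j cc) Dstar) ∧
        (Real.sqrt (∑ i, (Dstar j i) ^ 2) = 1 ∧
          ∀ dd : Fin n → ℝ, Real.sqrt (∑ i, (dd i) ^ 2) = 1 →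
            f Cstar Dstar ≤ f Cstar (Function.update Dstar j dd)) :=
  stmt16_general Y lam L hlam hL f hf c d hdunit hcL hgap Ej hEj ha hb hnotie
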